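/- arXiv:2210.11455 — 3 statements merged into one kernel-verified Lean document; each statement's English description precedes it below -/
import Mathlib

section
/- Let (u_n), (v_n) be complex sequences and (α_n), (δ_n) complex sequences such that the double series Σ_{n≥0} Σ_{r=0}^{n} |α_r · u_{n-r} · v_{n+r} · δ_n| converges. Define β_n = Σ_{r=0}^{n} α_r u_{n-r} v_{n+r} and γ_n = Σ_{r=n}^{∞} δ_r u_{r-n} v_{r+n}. Then Σ_{n=0}^{∞} α_n γ_n = Σ_{n=0}^{∞} β_n δ_n, with both series converging. -/
open Finset

/-! Both sides are the two iterated sums of the triangular array `α_r u_{n-r} v_{n+r} δ_n`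
(`0 ≤ r ≤ n`): summing each row `n` gives `β_n δ_n`, summing each column `r` gives `α_r γ_r`.
Summability of the array over `ℕ × ℕ` makes all row and column series summable and lets the two
orders of summation be exchanged (Fubini for unconditionally summable families). -/

section BaileyArray

variable {𝕜 : Type*} [NormedField 𝕜]

def baileyArray (u v α δ : ℕ → 𝕜) (p : ℕ × ℕ) : 𝕜 :=
  if p.2 ≤ p.1 then α p.2 * u (p.1 - p.2) * v (p.1 + p.2) * δ p.1 else 0

theorem tsum_baileyArray_row (u v α δ : ℕ → 𝕜) (n : ℕ) :
    ∑' r, baileyArray u v α δ (n, r) =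
      (∑ r ∈ range (n + 1), α r * u (n - r) * v (n + r)) * δ n := by
  rw [tsum_eq_sum (s := range (n + 1)), sum_mul]
  · refine sum_congr rfl fun r hr => ?_
    simp [baileyArray, Nat.lt_succ_iff.mp (mem_range.mp hr)]
  · intro r hr
    simp [baileyArray, Nat.lt_succ_iff.not.mp (mem_range.not.mp hr)]

theorem tsum_baileyArray_col (u v α δ : ℕ → 𝕜) (r : ℕ) :
    ∑' n, baileyArray u v α δ (n, r) =
      α r * ∑' n, if r ≤ n then δ n * u (n - r) * v (n + r) else 0 := by
  rw [← tsum_mul_left]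
  refine tsum_congr fun n => ?_
  unfold baileyArray
  split_ifs <;> ring

theorem bailey_transform_of_summable [CompleteSpace 𝕜] {u v α δ β γ : ℕ → 𝕜}
    (hf : Summable (baileyArray u v α δ))
    (hβ : ∀ n, β n = ∑ r ∈ range (n + 1), α r * u (n - r) * v (n + r))
    (hγ : ∀ n, γ n = ∑' r, if n ≤ r then δ r * u (r - n) * v (r + n) else 0) :
    Summable (fun n => α n * γ n) ∧ Summable (fun n => β n * δ n) ∧
      ∑' n, α n * γ n = ∑' n, β n * δ n := by
  have hrow (n : ℕ) : ∑' r, baileyArray u v α δ (n, r) = β n * δ n := by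
    rw [tsum_baileyArray_row, hβ]
  have hcol (r : ℕ) : ∑' n, baileyArray u v α δ (n, r) = α r * γ r := by
    rw [tsum_baileyArray_col, hγ]
  refine ⟨?_, ?_, ?_⟩
  · simpa only [Prod.swap_prod_mk, hcol] using hf.prod_symm.prod
  · simpa only [hrow] using hf.prod
  · simp only [← hcol, ← hrow]
    exact hf.tsum_comm (f := fun n r => baileyArray u v α δ (n, r))

end BaileyArray

/-- Bailey's lemma (1948) for infinite series, under absolute convergence of the
double series. -/
theorem bailey_transform_infinite (u v α δ : ℕ → ℂ)
    (habs : Summable (fun p : ℕ × ℕ =>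
      if p.2 ≤ p.1 then ‖α p.2 * u (p.1 - p.2) * v (p.1 + p.2) * δ p.1‖ else 0))
    (β γ : ℕ → ℂ)
    (hβ : ∀ n, β n = ∑ r ∈ Finset.range (n + 1), α r * u (n - r) * v (n + r))
    (hγ : ∀ n, γ n = ∑' r : ℕ, if n ≤ r then δ r * u (r - n) * v (r + n) else 0) :
    Summable (fun n => α n * γ n) ∧ Summable (fun n => β n * δ n) ∧
      ∑' n : ℕ, α n * γ n = ∑' n : ℕ, β n * δ n := by
  refine bailey_transform_of_summable (.of_norm ?_) hβ hγ
  convert habs using 2 with p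
  unfold baileyArray
  split_ifs <;> simp
end

section
/- Let X be a type and let D : ℂ → X → X be a family of invertible operators (D(t) ∘ D(−t) = id and D(0) = id) and M : ℂ → X → X a family of operators satisfying the operator star-triangle relation M(s) ∘ D(s+t) ∘ M(t) = D(t) ∘ M(s+t) ∘ D(s) for all s, t ∈ ℂ. Suppose α, β ∈ X satisfy β = M(t) α (i.e. form a Bailey pair with respect to t). Define α' = D(s) α and β' = D(−t) ∘ M(s) ∘ D(s+t) β. Then β' = M(t+s) α', i.e. α', β' form a Bailey pair with respect to t+s. -/
/-- The abstract Bailey lemma. -/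
theorem bailey_lemma {X : Type*} (D M : ℂ → X → X)
    (hDrefl : ∀ t : ℂ, D t ∘ D (-t) = id)
    (hD0 : D 0 = id)
    (hSTR : ∀ s t : ℂ, M s ∘ D (s + t) ∘ M t = D t ∘ M (s + t) ∘ D s)
    (t s : ℂ) (α β : X) (hpair : β = M t α) :
    (D (-t) ∘ M s ∘ D (s + t)) β = M (t + s) (D s α) := by
  subst hpair
  have h1 : (M s ∘ D (s + t) ∘ M t) α = (D t ∘ M (s + t) ∘ D s) α := by
    rw [hSTR]
  have h2 : (D (-t) ∘ D t) (M (s + t) (D s α)) = M (s + t) (D s α) := by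
    have := hDrefl (-t)
    rw [neg_neg] at this
    rw [this]; rfl
  simp only [Function.comp_apply] at h1 h2 ⊢
  rw [h1, h2, add_comm s t]
end

section
/- Let X be a type, D : ℂ → X → X with D(t) ∘ D(−t) = id and D(0) = id, and M : ℂ → X → X satisfying M(s) ∘ D(s+t) ∘ M(t) = D(t) ∘ M(s+t) ∘ D(s) for all s, t ∈ ℂ. Fix δ ∈ X and t ∈ ℂ, and set β₀ = M(t) δ. For a sequence of shifts s₁, s₂, … ∈ ℂ, define inductively α₀ = δ, t₀ = t, t_{n+1} = t_n + s_{n+1}, α_{n+1} = D(s_{n+1}) α_n, and β_{n+1} = D(−t_n) ∘ M(s_{n+1}) ∘ D(t_{n+1}) β_n. Then for every n ≥ 0, β_n = M(t_n) α_n. -/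
/-- The Bailey chain: iterating the Bailey lemma from the trivial seed pair
produces Bailey pairs at every stage. -/
theorem bailey_chain {X : Type*} (D M : ℂ → X → X)
    (hDrefl : ∀ t : ℂ, D t ∘ D (-t) = id)
    (hD0 : D 0 = id)
    (hSTR : ∀ s t : ℂ, M s ∘ D (s + t) ∘ M t = D t ∘ M (s + t) ∘ D s)
    (δ : X) (t : ℂ) (s : ℕ → ℂ)
    (tseq : ℕ → ℂ) (α β : ℕ → X)
    (ht0 : tseq 0 = t)
    (htsucc : ∀ n : ℕ, tseq (n + 1) = tseq n + s (n + 1))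
    (hα0 : α 0 = δ) (hβ0 : β 0 = M t δ)
    (hαsucc : ∀ n : ℕ, α (n + 1) = D (s (n + 1)) (α n))
    (hβsucc : ∀ n : ℕ, β (n + 1) = (D (-(tseq n)) ∘ M (s (n + 1)) ∘ D (tseq (n + 1))) (β n)) :
    ∀ n : ℕ, β n = M (tseq n) (α n) := by
  intro n
  induction n with
  | zero => simp [hβ0, hα0, ht0]
  | succ n ih =>
    have hinv : ∀ x : X, D (-(tseq n)) (D (tseq n) x) = x := by
      intro x
      have := congrFun (hDrefl (-(tseq n))) x
      simpa using this
    have hstr := congrFun (hSTR (s (n + 1)) (tseq n)) (α n)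
    rw [hβsucc, ih, hαsucc, htsucc]
    simp only [Function.comp_apply, add_comm (tseq n) (s (n + 1))]
    simp only [Function.comp_apply] at hstr
    rw [hstr]
    simp [hinv]
end
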